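/- In the one-period return setup, E[Xτ₁ | σ(τ₀)] = γτ₀·(μΔ + βετ₀ + βE[S] + ρE[Z]) + μΔ·E[U] + β(ετ₀·E[U] + E[SU]) + ρ·E[ZU] almost surely. -/

import Mathlib

open MeasureTheory ProbabilityTheory Real

lemma gauss01_symm : (gaussianReal 0 1).map (fun x => -x) = gaussianReal 0 1 := by
  have h := gaussianReal_map_const_mul (μ := 0) (v := 1) (-1)
  have h1 : (fun x : ℝ => -x) = ((-1 : ℝ) * ·) := by funext x; ring
  have h2 : (⟨(-1 : ℝ)^2, sq_nonneg _⟩ : NNReal) * 1 = 1 := by ext; norm_num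
  rw [h1, h]
  congr 1
  · norm_num

lemma gauss01_mean : ∫ x, x ∂(gaussianReal 0 1) = 0 := by
  have h := integral_map (μ := gaussianReal 0 1) (φ := fun x : ℝ => -x)
    measurable_neg.aemeasurable (f := fun x : ℝ => x) aestronglyMeasurable_id
  rw [gauss01_symm] at h
  have h2 : ∫ (x : ℝ), -x ∂(gaussianReal 0 1) = - ∫ (x : ℝ), x ∂(gaussianReal 0 1) :=
    integral_neg _
  linarith [h, h2]

lemma gauss01_integrable : Integrable (fun x : ℝ => x) (gaussianReal 0 1) := by
  rw [gaussianReal_of_var_ne_zero 0 one_ne_zero]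
  rw [integrable_withDensity_iff (measurable_gaussianPDF 0 1)
    (Filter.Eventually.of_forall fun x => ENNReal.ofReal_lt_top)]
  have : (fun x : ℝ => x * (gaussianPDF 0 1 x).toReal)
      = fun x : ℝ => (Real.sqrt (2 * Real.pi))⁻¹ * (x * Real.exp (-(1/2) * x^2)) := by
    funext x
    rw [gaussianPDF, ENNReal.toReal_ofReal (gaussianPDFReal_nonneg 0 1 x), gaussianPDFReal]
    have h : -(x - 0)^2 / (2 * ((1 : NNReal) : ℝ)) = -(1/2) * x^2 := by
      push_cast; ring
    rw [h]
    push_cast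
    ring
  rw [this]
  exact (integrable_mul_exp_neg_mul_sq (by norm_num : (0:ℝ) < 1/2)).const_mul _

lemma L2mul {Ω : Type*} {mΩ : MeasurableSpace Ω} {P : Measure Ω} {f g : Ω → ℝ}
    (hf : MemLp f 2 P) (hg : MemLp g 2 P) : Integrable (fun ω => f ω * g ω) P := by
  have h := hf.smul (r := 1) hg (hpqr := ⟨by simp [ENNReal.inv_two_add_inv_two]⟩)
  rw [memLp_one_iff_integrable] at h
  exact h.congr (Filter.Eventually.of_forall fun ω => by simp [smul_eq_mul, mul_comm])

theorem stmt5 {Ω : Type*} {mΩ : MeasurableSpace Ω} (P : Measure Ω) [IsProbabilityMeasure P]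
    (μ β σ ρ Δ lam γ ε : ℝ) (hΔ : 0 < Δ) (hlam : 0 < lam)
    (hγ : γ = Real.exp (-(lam * Δ))) (hε : ε = (1 - γ) / lam)
    (τ₀ U S Z W : Ω → ℝ)
    (hτ : Measurable τ₀) (hU : Measurable U) (hS : Measurable S) (hZ : Measurable Z)
    (hW : Measurable W)
    (hτm : ∀ n : ℕ, Integrable (fun ω => |τ₀ ω| ^ n) P)
    (hUm : ∀ n : ℕ, Integrable (fun ω => |U ω| ^ n) P)
    (hSm : ∀ n : ℕ, Integrable (fun ω => |S ω| ^ n) P)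
    (hZm : ∀ n : ℕ, Integrable (fun ω => |Z ω| ^ n) P)
    (hindep : IndepFun (fun ω => (U ω, S ω, Z ω)) τ₀ P)
    (hWlaw : Measure.map W P = gaussianReal 0 1)
    (hWindep : IndepFun W (fun ω => (τ₀ ω, U ω, S ω, Z ω)) P)
    (Y X : Ω → ℝ)
    (hY : Y = fun ω => ε * τ₀ ω + S ω)
    (hYpos : ∀ᵐ ω ∂P, 0 ≤ Y ω)
    (hX : X = fun ω => μ * Δ + β * Y ω + σ * Real.sqrt (Y ω) * W ω + ρ * Z ω)
    :
    P[fun ω => X ω * (γ * τ₀ ω + U ω) | MeasurableSpace.comap τ₀ inferInstance] =ᵐ[P]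
      fun ω => γ * τ₀ ω * (μ * Δ + β * ε * τ₀ ω
          + β * (∫ ω', S ω' ∂P) + ρ * (∫ ω', Z ω' ∂P))
        + μ * Δ * (∫ ω', U ω' ∂P)
        + β * (ε * τ₀ ω * (∫ ω', U ω' ∂P) + ∫ ω', S ω' * U ω' ∂P)
        + ρ * (∫ ω', Z ω' * U ω' ∂P) := by
  simp only [hY] at hYpos
  -- MemLp facts
  have hτ2 : MemLp τ₀ 2 P :=
    (memLp_two_iff_integrable_sq hτ.aestronglyMeasurable).2 (by simpa [sq_abs] using hτm 2)
  have hU2 : MemLp U 2 P :=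
    (memLp_two_iff_integrable_sq hU.aestronglyMeasurable).2 (by simpa [sq_abs] using hUm 2)
  have hS2 : MemLp S 2 P :=
    (memLp_two_iff_integrable_sq hS.aestronglyMeasurable).2 (by simpa [sq_abs] using hSm 2)
  have hZ2 : MemLp Z 2 P :=
    (memLp_two_iff_integrable_sq hZ.aestronglyMeasurable).2 (by simpa [sq_abs] using hZm 2)
  have hτ1 : Integrable τ₀ P := hτ2.integrable one_le_two
  have hU1 : Integrable U P := hU2.integrable one_le_two
  have hS1 : Integrable S P := hS2.integrable one_le_two
  have hZ1 : Integrable Z P := hZ2.integrable one_le_two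
  -- sqrt Y
  have hYmeas : Measurable[mΩ] fun ω => ε * τ₀ ω + S ω := (hτ.const_mul ε).add hS
  have hsqm : Measurable[mΩ] fun ω => Real.sqrt (ε * τ₀ ω + S ω) :=
    Real.continuous_sqrt.measurable.comp hYmeas
  have hYint : Integrable (fun ω => ε * τ₀ ω + S ω) P := (hτ1.const_mul ε).add hS1
  have hsq2 : MemLp (fun ω => Real.sqrt (ε * τ₀ ω + S ω)) 2 P := by
    refine (memLp_two_iff_integrable_sq hsqm.aestronglyMeasurable).2 ?_
    refine hYint.congr ?_
    filter_upwards [hYpos] with ω hω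
    rw [Real.sq_sqrt hω]
  -- W facts
  have hWint : Integrable W P := by
    have h0 : Integrable (fun x : ℝ => x) (Measure.map W P) := by
      rw [hWlaw]; exact gauss01_integrable
    exact (integrable_map_measure measurable_id.aestronglyMeasurable hW.aemeasurable).mp h0
  have hEW : ∫ ω, W ω ∂P = 0 := by
    have h := integral_map (μ := P) hW.aemeasurable (f := fun x : ℝ => x)
      measurable_id.aestronglyMeasurable
    rw [hWlaw, gauss01_mean] at h
    exact h.symm
  -- product integrability
  have hττ := L2mul hτ2 hτ2
  have hτU := L2mul hτ2 hU2
  have hτS := L2mul hτ2 hS2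
  have hτZ := L2mul hτ2 hZ2
  have hSU := L2mul hS2 hU2
  have hZU := L2mul hZ2 hU2
  have hsqτ := L2mul hsq2 hτ2
  have hsqU := L2mul hsq2 hU2
  -- integrability of the five terms
  have hT1 : Integrable (fun ω => (μ * Δ + β * ε * τ₀ ω) * (γ * τ₀ ω)) P := by
    have h : (fun ω => (μ * Δ + β * ε * τ₀ ω) * (γ * τ₀ ω))
        = fun ω => (μ * Δ * γ) * τ₀ ω + (β * ε * γ) * (τ₀ ω * τ₀ ω) := by funext ω; ring
    rw [h]; exact (hτ1.const_mul _).add (hττ.const_mul _)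
  have hT2 : Integrable (fun ω => (μ * Δ + β * ε * τ₀ ω) * U ω) P := by
    have h : (fun ω => (μ * Δ + β * ε * τ₀ ω) * U ω)
        = fun ω => (μ * Δ) * U ω + (β * ε) * (τ₀ ω * U ω) := by funext ω; ring
    rw [h]; exact (hU1.const_mul _).add (hτU.const_mul _)
  have hT3 : Integrable (fun ω => (γ * τ₀ ω) * (β * S ω + ρ * Z ω)) P := by
    have h : (fun ω => (γ * τ₀ ω) * (β * S ω + ρ * Z ω))
        = fun ω => (γ * β) * (τ₀ ω * S ω) + (γ * ρ) * (τ₀ ω * Z ω) := by funext ω; ring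
    rw [h]; exact (hτS.const_mul _).add (hτZ.const_mul _)
  have hT4 : Integrable (fun ω => (β * S ω + ρ * Z ω) * U ω) P := by
    have h : (fun ω => (β * S ω + ρ * Z ω) * U ω)
        = fun ω => β * (S ω * U ω) + ρ * (Z ω * U ω) := by funext ω; ring
    rw [h]; exact (hSU.const_mul _).add (hZU.const_mul _)
  have hg5int : Integrable (fun ω => σ * Real.sqrt (ε * τ₀ ω + S ω) * (γ * τ₀ ω + U ω)) P := by
    have h : (fun ω => σ * Real.sqrt (ε * τ₀ ω + S ω) * (γ * τ₀ ω + U ω))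
        = fun ω => (σ * γ) * (Real.sqrt (ε * τ₀ ω + S ω) * τ₀ ω)
          + σ * (Real.sqrt (ε * τ₀ ω + S ω) * U ω) := by funext ω; ring
    rw [h]; exact (hsqτ.const_mul _).add (hsqU.const_mul _)
  have hg5meas : Measurable[mΩ] (fun ω => σ * Real.sqrt (ε * τ₀ ω + S ω) * (γ * τ₀ ω + U ω)) :=
    (hsqm.const_mul σ).mul ((hτ.const_mul γ).add hU)
  have hWg5 : IndepFun W (fun ω => σ * Real.sqrt (ε * τ₀ ω + S ω) * (γ * τ₀ ω + U ω)) P := by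
    have hψ : Measurable (fun p : ℝ × ℝ × ℝ × ℝ =>
        σ * Real.sqrt (ε * p.1 + p.2.2.1) * (γ * p.1 + p.2.1)) :=
      ((Real.continuous_sqrt.measurable.comp
        ((measurable_fst.const_mul ε).add
          (measurable_fst.comp (measurable_snd.comp measurable_snd)))).const_mul σ).mul
        ((measurable_fst.const_mul γ).add (measurable_fst.comp measurable_snd))
    exact hWindep.comp measurable_id hψ
  have hT5 : Integrable
      (fun ω => σ * Real.sqrt (ε * τ₀ ω + S ω) * W ω * (γ * τ₀ ω + U ω)) P := by
    have h : (fun ω => σ * Real.sqrt (ε * τ₀ ω + S ω) * W ω * (γ * τ₀ ω + U ω))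
        = fun ω => W ω * (σ * Real.sqrt (ε * τ₀ ω + S ω) * (γ * τ₀ ω + U ω)) := by
      funext ω; ring
    rw [h]; exact hWg5.integrable_mul hWint hg5int
  have hzero_int : ∀ s : Set Ω, IntegrableOn (fun _ => (0:ℝ)) s P :=
    fun s => (integrable_zero _ _ P).integrableOn
  have hsetint : ∀ B : Set ℝ, MeasurableSet B →
      ∫ x in τ₀ ⁻¹' B, (σ * Real.sqrt (ε * τ₀ x + S x) * W x * (γ * τ₀ x + U x)) ∂P = 0 := by
    intro B hB
    rw [← integral_indicator (hτ hB)]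
    have e : (τ₀ ⁻¹' B).indicator
          (fun ω => σ * Real.sqrt (ε * τ₀ ω + S ω) * W ω * (γ * τ₀ ω + U ω))
        = fun ω => W ω * (σ * Real.sqrt (ε * τ₀ ω + S ω) * (γ * τ₀ ω + U ω)
            * Set.indicator B (fun _ => (1:ℝ)) (τ₀ ω)) := by
      funext ω
      by_cases hω : τ₀ ω ∈ B
      · rw [Set.indicator_of_mem (show ω ∈ τ₀ ⁻¹' B from hω),
          Set.indicator_of_mem hω]; ring
      · rw [Set.indicator_of_notMem (show ω ∉ τ₀ ⁻¹' B from hω),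
          Set.indicator_of_notMem hω]; ring
    rw [e]
    have hg : Measurable[mΩ] (fun ω => σ * Real.sqrt (ε * τ₀ ω + S ω) * (γ * τ₀ ω + U ω)
        * Set.indicator B (fun _ => (1:ℝ)) (τ₀ ω)) :=
      hg5meas.mul ((measurable_const.indicator hB).comp hτ)
    have hWg : IndepFun W (fun ω => σ * Real.sqrt (ε * τ₀ ω + S ω) * (γ * τ₀ ω + U ω)
        * Set.indicator B (fun _ => (1:ℝ)) (τ₀ ω)) P := by
      have hψ : Measurable (fun p : ℝ × ℝ × ℝ × ℝ =>
          σ * Real.sqrt (ε * p.1 + p.2.2.1) * (γ * p.1 + p.2.1)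
            * Set.indicator B (fun _ => (1:ℝ)) p.1) :=
        (((Real.continuous_sqrt.measurable.comp
          ((measurable_fst.const_mul ε).add
            (measurable_fst.comp (measurable_snd.comp measurable_snd)))).const_mul σ).mul
          ((measurable_fst.const_mul γ).add (measurable_fst.comp measurable_snd))).mul
          ((measurable_const.indicator hB).comp measurable_fst)
      exact hWindep.comp measurable_id hψ
    have hIM : ∫ ω, W ω * (σ * Real.sqrt (ε * τ₀ ω + S ω) * (γ * τ₀ ω + U ω)
        * Set.indicator B (fun _ => (1:ℝ)) (τ₀ ω)) ∂P
        = (∫ ω, W ω ∂P) * ∫ ω, (σ * Real.sqrt (ε * τ₀ ω + S ω) * (γ * τ₀ ω + U ω)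
        * Set.indicator B (fun _ => (1:ℝ)) (τ₀ ω)) ∂P :=
      hWg.integral_fun_mul_eq_mul_integral hW.aestronglyMeasurable hg.aestronglyMeasurable
    rw [hIM, hEW, zero_mul]
  -- conditional expectations of the five terms
  set m : MeasurableSpace Ω := MeasurableSpace.comap τ₀ inferInstance with hm_def
  have hm : m ≤ mΩ := hτ.comap_le
  have hτ' : Measurable[m] τ₀ := comap_measurable τ₀
  have htrip : Measurable[mΩ] fun ω => (U ω, S ω, Z ω) := hU.prodMk (hS.prodMk hZ)
  set mT : MeasurableSpace Ω :=
    MeasurableSpace.comap (fun ω => (U ω, S ω, Z ω)) inferInstance with hmT_def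
  have hmT : mT ≤ mΩ := htrip.comap_le
  have htrip' : Measurable[mT] fun ω => (U ω, S ω, Z ω) :=
    comap_measurable (fun ω => (U ω, S ω, Z ω))
  have hU' : Measurable[mT] U := measurable_fst.comp htrip'
  have hS' : Measurable[mT] S := measurable_fst.comp (measurable_snd.comp htrip')
  have hZ' : Measurable[mT] Z := measurable_snd.comp (measurable_snd.comp htrip')
  have hIndep : Indep mT m P := hindep
  have hAs : StronglyMeasurable[m] (fun ω => μ * Δ + β * ε * τ₀ ω) :=
    (measurable_const.add (hτ'.const_mul (β * ε))).stronglyMeasurable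
  have hγτs : StronglyMeasurable[m] (fun ω => γ * τ₀ ω) := (hτ'.const_mul γ).stronglyMeasurable
  have h1 : P[(fun ω => (μ * Δ + β * ε * τ₀ ω) * (γ * τ₀ ω))|m]
      =ᵐ[P] fun ω => (μ * Δ + β * ε * τ₀ ω) * (γ * τ₀ ω) :=
    Filter.EventuallyEq.of_eq (condExp_of_stronglyMeasurable (μ := P) hm
      (f := fun ω => (μ * Δ + β * ε * τ₀ ω) * (γ * τ₀ ω)) (by exact hAs.mul hγτs) hT1)
  have hCEU : P[U|m] =ᵐ[P] fun _ => ∫ ω', U ω' ∂P :=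
    condExp_indep_eq hmT hm hU'.stronglyMeasurable hIndep
  have h2 : P[(fun ω => (μ * Δ + β * ε * τ₀ ω) * U ω)|m]
      =ᵐ[P] fun ω => (μ * Δ + β * ε * τ₀ ω) * (∫ ω', U ω' ∂P) := by
    have hp := condExp_mul_of_stronglyMeasurable_left (μ := P)
      (f := fun ω => μ * Δ + β * ε * τ₀ ω) (g := U) hAs hT2 hU1
    exact hp.trans (Filter.EventuallyEq.mul (Filter.EventuallyEq.rfl) hCEU)
  have hg3s : StronglyMeasurable[mT] (fun ω => β * S ω + ρ * Z ω) :=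
    ((hS'.const_mul β).add (hZ'.const_mul ρ)).stronglyMeasurable
  have hg3int : Integrable (fun ω => β * S ω + ρ * Z ω) P :=
    (hS1.const_mul β).add (hZ1.const_mul ρ)
  have hCE3 : P[(fun ω => β * S ω + ρ * Z ω)|m]
      =ᵐ[P] fun _ => β * (∫ ω', S ω' ∂P) + ρ * (∫ ω', Z ω' ∂P) := by
    have h := condExp_indep_eq hmT hm hg3s hIndep
    have hi : ∫ ω', (β * S ω' + ρ * Z ω') ∂P
        = β * (∫ ω', S ω' ∂P) + ρ * (∫ ω', Z ω' ∂P) := by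
      rw [integral_add (hS1.const_mul β) (hZ1.const_mul ρ), integral_const_mul,
        integral_const_mul]
    rw [hi] at h
    exact h
  have h3 : P[(fun ω => (γ * τ₀ ω) * (β * S ω + ρ * Z ω))|m]
      =ᵐ[P] fun ω => (γ * τ₀ ω) * (β * (∫ ω', S ω' ∂P) + ρ * (∫ ω', Z ω' ∂P)) := by
    have hp := condExp_mul_of_stronglyMeasurable_left (μ := P)
      (f := fun ω => γ * τ₀ ω) (g := fun ω => β * S ω + ρ * Z ω) hγτs hT3 hg3int
    exact hp.trans (Filter.EventuallyEq.mul (Filter.EventuallyEq.rfl) hCE3)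
  have hg4s : StronglyMeasurable[mT] (fun ω => (β * S ω + ρ * Z ω) * U ω) :=
    (((hS'.const_mul β).add (hZ'.const_mul ρ)).mul hU').stronglyMeasurable
  have h4 : P[(fun ω => (β * S ω + ρ * Z ω) * U ω)|m]
      =ᵐ[P] fun _ => β * (∫ ω', S ω' * U ω' ∂P) + ρ * (∫ ω', Z ω' * U ω' ∂P) := by
    have h := condExp_indep_eq hmT hm hg4s hIndep
    have hi : ∫ ω', ((β * S ω' + ρ * Z ω') * U ω') ∂P
        = β * (∫ ω', S ω' * U ω' ∂P) + ρ * (∫ ω', Z ω' * U ω' ∂P) := by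
      have e : (fun ω => (β * S ω + ρ * Z ω) * U ω)
          = fun ω => β * (S ω * U ω) + ρ * (Z ω * U ω) := by funext ω; ring
      rw [e, integral_add (hSU.const_mul β) (hZU.const_mul ρ), integral_const_mul,
        integral_const_mul]
    rw [hi] at h
    exact h
  have h5 : P[(fun ω => σ * Real.sqrt (ε * τ₀ ω + S ω) * W ω * (γ * τ₀ ω + U ω))|m]
      =ᵐ[P] fun _ => (0 : ℝ) := by
    refine (ae_eq_condExp_of_forall_setIntegral_eq hm hT5
      (fun s _ _ => hzero_int s)
      (fun s hs _ => ?_) stronglyMeasurable_const.aestronglyMeasurable).symm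
    obtain ⟨B, hB, rfl⟩ := hs
    simp only [integral_zero]
    exact (hsetint B hB).symm
  -- assemble
  have hsum : (fun ω => X ω * (γ * τ₀ ω + U ω))
      = fun ω => (μ * Δ + β * ε * τ₀ ω) * (γ * τ₀ ω)
        + ((μ * Δ + β * ε * τ₀ ω) * U ω
        + ((γ * τ₀ ω) * (β * S ω + ρ * Z ω)
        + ((β * S ω + ρ * Z ω) * U ω
        + σ * Real.sqrt (ε * τ₀ ω + S ω) * W ω * (γ * τ₀ ω + U ω)))) := by
    funext ω; simp only [hX, hY]; ring
  rw [hsum]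
  have hr4 : P[(fun ω => (β * S ω + ρ * Z ω) * U ω
      + σ * Real.sqrt (ε * τ₀ ω + S ω) * W ω * (γ * τ₀ ω + U ω))|m]
      =ᵐ[P] fun _ => (β * (∫ ω', S ω' * U ω' ∂P) + ρ * (∫ ω', Z ω' * U ω' ∂P)) + 0 :=
    (condExp_add hT4 hT5 m).trans (h4.add h5)
  have hr3 : P[(fun ω => (γ * τ₀ ω) * (β * S ω + ρ * Z ω)
      + ((β * S ω + ρ * Z ω) * U ω
      + σ * Real.sqrt (ε * τ₀ ω + S ω) * W ω * (γ * τ₀ ω + U ω)))|m]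
      =ᵐ[P] fun ω => (γ * τ₀ ω) * (β * (∫ ω', S ω' ∂P) + ρ * (∫ ω', Z ω' ∂P))
        + ((β * (∫ ω', S ω' * U ω' ∂P) + ρ * (∫ ω', Z ω' * U ω' ∂P)) + 0) :=
    (condExp_add hT3 (hT4.add hT5) m).trans (h3.add hr4)
  have hr2 : P[(fun ω => (μ * Δ + β * ε * τ₀ ω) * U ω
      + ((γ * τ₀ ω) * (β * S ω + ρ * Z ω)
      + ((β * S ω + ρ * Z ω) * U ω
      + σ * Real.sqrt (ε * τ₀ ω + S ω) * W ω * (γ * τ₀ ω + U ω))))|m]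
      =ᵐ[P] fun ω => (μ * Δ + β * ε * τ₀ ω) * (∫ ω', U ω' ∂P)
        + ((γ * τ₀ ω) * (β * (∫ ω', S ω' ∂P) + ρ * (∫ ω', Z ω' ∂P))
        + ((β * (∫ ω', S ω' * U ω' ∂P) + ρ * (∫ ω', Z ω' * U ω' ∂P)) + 0)) :=
    (condExp_add hT2 (hT3.add (hT4.add hT5)) m).trans (h2.add hr3)
  have hall : P[(fun ω => (μ * Δ + β * ε * τ₀ ω) * (γ * τ₀ ω)
      + ((μ * Δ + β * ε * τ₀ ω) * U ω
      + ((γ * τ₀ ω) * (β * S ω + ρ * Z ω)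
      + ((β * S ω + ρ * Z ω) * U ω
      + σ * Real.sqrt (ε * τ₀ ω + S ω) * W ω * (γ * τ₀ ω + U ω)))))|m]
      =ᵐ[P] fun ω => (μ * Δ + β * ε * τ₀ ω) * (γ * τ₀ ω)
        + ((μ * Δ + β * ε * τ₀ ω) * (∫ ω', U ω' ∂P)
        + ((γ * τ₀ ω) * (β * (∫ ω', S ω' ∂P) + ρ * (∫ ω', Z ω' ∂P))
        + ((β * (∫ ω', S ω' * U ω' ∂P) + ρ * (∫ ω', Z ω' * U ω' ∂P)) + 0))) :=
    (condExp_add hT1 (hT2.add (hT3.add (hT4.add hT5))) m).trans (h1.add hr2)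
  refine hall.trans (Filter.Eventually.of_forall fun ω => ?_)
  ring
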